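/- arXiv:1307.3142 — 6 statements merged into one kernel-verified Lean document; each statement's English description precedes it below -/
import Mathlib

section
/- Let e ≥ 1, let x = (ℓ − t, x_1, x_2) ∈ Δ_ℓ^2 with t = x_1 + x_2 ≤ e, and let y = (ℓ − x_1 − 2e − 1, x_1 + e + 1 + u, e − u) ∈ Δ_ℓ^2 with 0 ≤ u ≤ e, where u = e whenever x_2 > 0. Suppose that either (a) t < e, or (b) t = e and 0 < x_1 < e. Then there is no e-perfect code in Δ_ℓ^2 containing both x and y as codewords. -/
/-- The discrete `n`-simplex `Δ_ℓ^n`: tuples of `n+1` nonnegative integers summing to `ℓ`. -/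
def simplex (n : ℕ) (ℓ : ℤ) : Set (Fin (n + 1) → ℤ) :=
  {x | (∀ i, 0 ≤ x i) ∧ ∑ i, x i = ℓ}

/-- The metric `d(x,y) = (1/2)∑|x_i − y_i| = ∑_{i : x_i > y_i}(x_i − y_i)` on the simplex. -/
def sdist {n : ℕ} (x y : Fin (n + 1) → ℤ) : ℤ :=
  ∑ i, max (x i - y i) 0

/-- The ball of radius `e` centered at `x` inside the simplex `Δ_ℓ^n`. -/
def ball (n : ℕ) (ℓ : ℤ) (x : Fin (n + 1) → ℤ) (e : ℤ) : Set (Fin (n + 1) → ℤ) :=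
  {w ∈ simplex n ℓ | sdist x w ≤ e}

/-- `C` is an `e`-perfect code in `Δ_ℓ^n`: every element of the simplex is at distance
at most `e` from exactly one codeword. -/
def IsPerfectCode (n : ℕ) (ℓ e : ℤ) (C : Set (Fin (n + 1) → ℤ)) : Prop :=
  C ⊆ simplex n ℓ ∧ ∀ w ∈ simplex n ℓ, ∃! c, c ∈ C ∧ sdist c w ≤ e

/-- The direction vector `f_{i,j}`: entry `1` at position `i`, `-1` at position `j`,
`0` elsewhere (for `i ≠ j`). -/
def fvec (n : ℕ) (i j : Fin (n + 1)) : Fin (n + 1) → ℤ :=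
  fun k => (if k = i then 1 else 0) - (if k = j then 1 else 0)

lemma sdist_eq (a b : Fin 3 → ℤ) :
    sdist a b = max (a 0 - b 0) 0 + max (a 1 - b 1) 0 + max (a 2 - b 2) 0 := by
  simp [sdist, Fin.sum_univ_three]

lemma mem_simplex_iff (ℓ : ℤ) (a : Fin 3 → ℤ) :
    a ∈ simplex 2 ℓ ↔ (0 ≤ a 0 ∧ 0 ≤ a 1 ∧ 0 ≤ a 2) ∧ a 0 + a 1 + a 2 = ℓ := by
  constructor
  · rintro ⟨h1, h2⟩
    exact ⟨⟨h1 0, h1 1, h1 2⟩, by rw [← h2, Fin.sum_univ_three]⟩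
  · rintro ⟨⟨h0, h1, h2⟩, hs⟩
    refine ⟨fun i => ?_, by rw [Fin.sum_univ_three]; exact hs⟩
    fin_cases i <;> assumption

/-- If two points of the simplex are at distance at most `2e`, there is a point of the
simplex within distance `e` of both. -/
lemma meet (e ℓ : ℤ) (he : 0 ≤ e) (a b : Fin 3 → ℤ)
    (ha : a ∈ simplex 2 ℓ) (hb : b ∈ simplex 2 ℓ) (hd : sdist a b ≤ 2 * e) :
    ∃ m ∈ simplex 2 ℓ, sdist a m ≤ e ∧ sdist b m ≤ e := by
  rw [mem_simplex_iff] at ha hb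
  rw [sdist_eq] at hd
  obtain ⟨⟨ha0, ha1, ha2⟩, has⟩ := ha
  obtain ⟨⟨hb0, hb1, hb2⟩, hbs⟩ := hb
  obtain ⟨p0, p1, p2, n0, n1, n2, hp⟩ : ∃ p0 p1 p2 n0 n1 n2 : ℤ,
      0 ≤ p0 ∧ 0 ≤ p1 ∧ 0 ≤ p2 ∧ 0 ≤ n0 ∧ 0 ≤ n1 ∧ 0 ≤ n2 ∧
      p0 - n0 = a 0 - b 0 ∧ p1 - n1 = a 1 - b 1 ∧ p2 - n2 = a 2 - b 2 ∧
      (p0 = 0 ∨ n0 = 0) ∧ (p1 = 0 ∨ n1 = 0) ∧ (p2 = 0 ∨ n2 = 0) ∧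
      p0 + p1 + p2 ≤ 2 * e :=
    ⟨max (a 0 - b 0) 0, max (a 1 - b 1) 0, max (a 2 - b 2) 0,
     max (b 0 - a 0) 0, max (b 1 - a 1) 0, max (b 2 - a 2) 0, by omega⟩
  obtain ⟨hp0, hp1, hp2, hn0, hn1, hn2, hd0, hd1, hd2, hz0, hz1, hz2, hD⟩ := hp
  obtain ⟨k, hk0, hke, hkD, hkD'⟩ : ∃ k : ℤ, 0 ≤ k ∧ k ≤ e ∧
      p0 + p1 + p2 - e ≤ k ∧ k ≤ p0 + p1 + p2 :=
    ⟨max (p0 + p1 + p2 - e) 0, by omega⟩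
  have hsum : p0 + p1 + p2 = n0 + n1 + n2 := by omega
  obtain ⟨q0, q1, q2, hq⟩ : ∃ q0 q1 q2 : ℤ,
      0 ≤ q0 ∧ q0 ≤ p0 ∧ 0 ≤ q1 ∧ q1 ≤ p1 ∧ 0 ≤ q2 ∧ q2 ≤ p2 ∧ q0 + q1 + q2 = k :=
    ⟨min k p0, min (k - min k p0) p1, k - min k p0 - min (k - min k p0) p1, by omega⟩
  obtain ⟨r0, r1, r2, hr⟩ : ∃ r0 r1 r2 : ℤ,
      0 ≤ r0 ∧ r0 ≤ n0 ∧ 0 ≤ r1 ∧ r1 ≤ n1 ∧ 0 ≤ r2 ∧ r2 ≤ n2 ∧ r0 + r1 + r2 = k :=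
    ⟨min k n0, min (k - min k n0) n1, k - min k n0 - min (k - min k n0) n1, by omega⟩
  refine ⟨![a 0 - q0 + r0, a 1 - q1 + r1, a 2 - q2 + r2],
    (mem_simplex_iff _ _).2 ?_, ?_, ?_⟩ <;>
    simp only [sdist_eq, Matrix.cons_val_zero, Matrix.cons_val_one, Matrix.head_cons,
      Matrix.cons_val_two, Matrix.tail_cons] <;> omega

theorem stmt_12 (e ℓ t x1 x2 u : ℤ) (he : 1 ≤ e) (ht : t = x1 + x2) (hte : t ≤ e)
    (hu0 : 0 ≤ u) (hue : u ≤ e) (hx2u : 0 < x2 → u = e)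
    (hx : ![ℓ - t, x1, x2] ∈ simplex 2 ℓ)
    (hy : ![ℓ - x1 - 2 * e - 1, x1 + e + 1 + u, e - u] ∈ simplex 2 ℓ)
    (hcase : t < e ∨ (t = e ∧ 0 < x1 ∧ x1 < e)) :
    ¬ ∃ C : Set (Fin 3 → ℤ), IsPerfectCode 2 ℓ e C ∧
      ![ℓ - t, x1, x2] ∈ C ∧ ![ℓ - x1 - 2 * e - 1, x1 + e + 1 + u, e - u] ∈ C := by
  rintro ⟨C, ⟨hCsub, hcover⟩, hxC, hyC⟩
  set X : Fin 3 → ℤ := ![ℓ - t, x1, x2] with hX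
  set Y : Fin 3 → ℤ := ![ℓ - x1 - 2 * e - 1, x1 + e + 1 + u, e - u] with hY
  rw [mem_simplex_iff] at hx hy
  simp only [hX, hY, Matrix.cons_val_zero, Matrix.cons_val_one, Matrix.head_cons,
    Matrix.cons_val_two, Matrix.tail_cons] at hx hy
  obtain ⟨⟨hx0, hx1, hx2⟩, -⟩ := hx
  obtain ⟨⟨hy0, hy1, hy2⟩, -⟩ := hy
  -- the point W whose ball is contained in B(X,2e) ∪ B(Y,2e)
  set W : Fin 3 → ℤ := ![ℓ - t - e - 1, x1 + u, e + 1 + x2 - u] with hW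
  have hWs : W ∈ simplex 2 ℓ := by
    rw [mem_simplex_iff]
    simp only [hW, Matrix.cons_val_zero, Matrix.cons_val_one, Matrix.head_cons,
      Matrix.cons_val_two, Matrix.tail_cons]
    omega
  obtain ⟨c, ⟨hcC, hcW⟩, -⟩ := hcover W hWs
  have hcs := hCsub hcC
  rw [mem_simplex_iff] at hcs
  obtain ⟨⟨hc0, hc1, hc2⟩, hcsum⟩ := hcs
  rw [sdist_eq] at hcW
  simp only [hW, Matrix.cons_val_zero, Matrix.cons_val_one, Matrix.head_cons,
    Matrix.cons_val_two, Matrix.tail_cons] at hcW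
  -- c is not X and not Y, since W is at distance e+1 from both
  have hcX : c ≠ X := by
    rintro rfl
    simp only [hX, Matrix.cons_val_zero, Matrix.cons_val_one, Matrix.head_cons,
      Matrix.cons_val_two, Matrix.tail_cons] at hcW
    omega
  have hcY : c ≠ Y := by
    rintro rfl
    simp only [hY, Matrix.cons_val_zero, Matrix.cons_val_one, Matrix.head_cons,
      Matrix.cons_val_two, Matrix.tail_cons] at hcW
    omega
  -- key geometric fact: the e-ball of W is contained in B(X,2e) ∪ B(Y,2e)
  have hkey : sdist c X ≤ 2 * e ∨ sdist c Y ≤ 2 * e := by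
    rw [sdist_eq, sdist_eq]
    simp only [hX, hY, Matrix.cons_val_zero, Matrix.cons_val_one, Matrix.head_cons,
      Matrix.cons_val_two, Matrix.tail_cons]
    omega
  have he' : (0 : ℤ) ≤ e := by omega
  rcases hkey with hk | hk
  · obtain ⟨m, hms, hcm, hXm⟩ :=
      meet e ℓ he' c X (hCsub hcC) (hCsub hxC) hk
    obtain ⟨c', -, huniq⟩ := hcover m hms
    exact hcX ((huniq c ⟨hcC, hcm⟩).trans (huniq X ⟨hxC, hXm⟩).symm)
  · obtain ⟨m, hms, hcm, hYm⟩ :=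
      meet e ℓ he' c Y (hCsub hcC) (hCsub hyC) hk
    obtain ⟨c', -, huniq⟩ := hcover m hms
    exact hcY ((huniq c ⟨hcC, hcm⟩).trans (huniq Y ⟨hyC, hYm⟩).symm)
end

section
/- Let e ≥ 1 and let C be a nontrivial e-perfect code in the discrete 2-simplex Δ_ℓ^2. Then either (ℓ − e, e, 0) ∈ C or (ℓ − e, 0, e) ∈ C. -/
lemma mem_simplex3 {ℓ : ℤ} {x : Fin 3 → ℤ} :
    x ∈ simplex 2 ℓ ↔ 0 ≤ x 0 ∧ 0 ≤ x 1 ∧ 0 ≤ x 2 ∧ x 0 + x 1 + x 2 = ℓ := by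
  constructor
  · rintro ⟨h1, h2⟩
    exact ⟨h1 0, h1 1, h1 2, by simpa [Fin.sum_univ_three] using h2⟩
  · rintro ⟨a, b, c, hd⟩
    refine ⟨fun i => ?_, by simpa [Fin.sum_univ_three] using hd⟩
    fin_cases i <;> assumption

lemma mem_simplex_vec {ℓ a b c : ℤ} (h : 0 ≤ a ∧ 0 ≤ b ∧ 0 ≤ c ∧ a + b + c = ℓ) :
    (![a, b, c] : Fin 3 → ℤ) ∈ simplex 2 ℓ := mem_simplex3.mpr (by simpa using h)

lemma sdist3 (x y : Fin 3 → ℤ) :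
    sdist x y = max (x 0 - y 0) 0 + max (x 1 - y 1) 0 + max (x 2 - y 2) 0 := by
  simp [sdist, Fin.sum_univ_three]

lemma vec_eq {x : Fin 3 → ℤ} {a b c : ℤ} (h0 : x 0 = a) (h1 : x 1 = b) (h2 : x 2 = c) :
    x = ![a, b, c] := by
  funext i; fin_cases i <;> simpa

lemma unique_cover {e ℓ : ℤ} {C : Set (Fin 3 → ℤ)} (hC : IsPerfectCode 2 ℓ e C)
    {x y w : Fin 3 → ℤ} (hx : x ∈ C) (hy : y ∈ C) (hw : w ∈ simplex 2 ℓ)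
    (hxw : sdist x w ≤ e) (hyw : sdist y w ≤ e) : x = y := by
  obtain ⟨u, -, hu⟩ := hC.2 w hw
  rw [hu x ⟨hx, hxw⟩, hu y ⟨hy, hyw⟩]

lemma cover_exists {e ℓ : ℤ} {C : Set (Fin 3 → ℤ)} (hC : IsPerfectCode 2 ℓ e C)
    {w : Fin 3 → ℤ} (hw : w ∈ simplex 2 ℓ) : ∃ x ∈ C, sdist x w ≤ e := by
  obtain ⟨u, ⟨h1, h2⟩, -⟩ := hC.2 w hw
  exact ⟨u, h1, h2⟩

/-- The reflection of the simplex swapping coordinates 1 and 2. -/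
def sw (x : Fin 3 → ℤ) : Fin 3 → ℤ := ![x 0, x 2, x 1]

@[simp] lemma sw0 (x : Fin 3 → ℤ) : sw x 0 = x 0 := rfl
@[simp] lemma sw1 (x : Fin 3 → ℤ) : sw x 1 = x 2 := rfl
@[simp] lemma sw2 (x : Fin 3 → ℤ) : sw x 2 = x 1 := rfl

lemma sw_sw (x : Fin 3 → ℤ) : sw (sw x) = x := by
  funext i; fin_cases i <;> rfl

lemma sdist_sw (x y : Fin 3 → ℤ) : sdist (sw x) (sw y) = sdist x y := by
  simp [sdist3]; ring

lemma mem_simplex_sw {ℓ : ℤ} {x : Fin 3 → ℤ} : sw x ∈ simplex 2 ℓ ↔ x ∈ simplex 2 ℓ := by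
  rw [mem_simplex3, mem_simplex3]
  simp; omega

lemma perfect_sw {e ℓ : ℤ} {C : Set (Fin 3 → ℤ)} (hC : IsPerfectCode 2 ℓ e C) :
    IsPerfectCode 2 ℓ e (sw ⁻¹' C) := by
  constructor
  · intro x hx
    exact mem_simplex_sw.mp (hC.1 hx)
  · intro w hw
    obtain ⟨y, ⟨hy1, hy2⟩, hyu⟩ := hC.2 (sw w) (mem_simplex_sw.mpr hw)
    refine ⟨sw y, ⟨by simpa [Set.mem_preimage, sw_sw] using hy1, ?_⟩, ?_⟩
    · calc sdist (sw y) w = sdist (sw y) (sw (sw w)) := by rw [sw_sw]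
        _ = sdist y (sw w) := sdist_sw _ _
        _ ≤ e := hy2
    · rintro z ⟨hz1, hz2⟩
      have hz : sw z = y := hyu (sw z) ⟨hz1, by rw [sdist_sw]; exact hz2⟩
      calc z = sw (sw z) := (sw_sw z).symm
        _ = sw y := by rw [hz]

/-- The codeword covering the first uncovered point on the edge `x_1 = 0` is forced. -/
lemma lemE {e ℓ : ℤ} (he : 1 ≤ e) {C : Set (Fin 3 → ℤ)} (hC : IsPerfectCode 2 ℓ e C)
    {c : Fin 3 → ℤ} (hcC : c ∈ C) (hc0 : c 0 = ℓ - c 1 - c 2) (hc1 : 0 ≤ c 1)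
    (hc2 : 0 ≤ c 2) (hse : c 1 + c 2 ≤ e) (hB : c 2 + e + 1 ≤ ℓ) :
    ∃ q, 0 ≤ q ∧ q ≤ e ∧ ![ℓ - c 2 - 2*e - 1, q, c 2 + 2*e + 1 - q] ∈ C ∧
      (1 ≤ c 1 → q = 0) := by
  have hBm : (![ℓ - c 2 - e - 1, 0, c 2 + e + 1] : Fin 3 → ℤ) ∈ simplex 2 ℓ :=
    mem_simplex_vec (by omega)
  have hdcB : sdist c ![ℓ - c 2 - e - 1, 0, c 2 + e + 1] = e + 1 := by
    rw [sdist3]; simp; omega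
  obtain ⟨c', hc'C, hc'B⟩ := cover_exists hC hBm
  have hne : c' ≠ c := by
    intro h; rw [h, hdcB] at hc'B; omega
  obtain ⟨hp0, hq0, hr0, hsum⟩ := mem_simplex3.mp (hC.1 hc'C)
  rw [sdist3] at hc'B; simp at hc'B
  have hr : c 2 + e + 1 ≤ c' 2 := by
    by_contra h
    push_neg at h
    have hN1 : (![ℓ - c 2 - e, 0, c 2 + e] : Fin 3 → ℤ) ∈ simplex 2 ℓ :=
      mem_simplex_vec (by omega)
    have h1 : sdist c ![ℓ - c 2 - e, 0, c 2 + e] ≤ e := by rw [sdist3]; simp; omega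
    have h2 : sdist c' ![ℓ - c 2 - e, 0, c 2 + e] ≤ e := by rw [sdist3]; simp; omega
    exact hne (unique_cover hC hc'C hcC hN1 h2 h1)
  have hqe : c' 1 ≤ e := by omega
  have heq : c' 1 + c' 2 = c 2 + 2*e + 1 := by
    by_contra h
    have hlt : c' 1 + c' 2 ≤ c 2 + 2*e := by omega
    have hMm : (![ℓ - c' 1 - c' 2 + e, 0, c' 1 + c' 2 - e] : Fin 3 → ℤ) ∈ simplex 2 ℓ :=
      mem_simplex_vec (by omega)
    have h1 : sdist c' ![ℓ - c' 1 - c' 2 + e, 0, c' 1 + c' 2 - e] ≤ e := by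
      rw [sdist3]; simp; omega
    have h2 : sdist c ![ℓ - c' 1 - c' 2 + e, 0, c' 1 + c' 2 - e] ≤ e := by
      rw [sdist3]; simp; omega
    exact hne (unique_cover hC hc'C hcC hMm h1 h2)
  have hq00 : 1 ≤ c 1 → c' 1 = 0 := by
    intro hb1
    by_contra h
    have hq1 : 1 ≤ c' 1 := by omega
    have hN2 : (![ℓ - c 2 - e - 1, 1, c 2 + e] : Fin 3 → ℤ) ∈ simplex 2 ℓ :=
      mem_simplex_vec (by omega)
    have h1 : sdist c ![ℓ - c 2 - e - 1, 1, c 2 + e] ≤ e := by rw [sdist3]; simp; omega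
    have h2 : sdist c' ![ℓ - c 2 - e - 1, 1, c 2 + e] ≤ e := by rw [sdist3]; simp; omega
    exact hne (unique_cover hC hc'C hcC hN2 h2 h1)
  refine ⟨c' 1, hq0, hqe, ?_, hq00⟩
  have hcc : c' = ![ℓ - c 2 - 2*e - 1, c' 1, c 2 + 2*e + 1 - c' 1] :=
    vec_eq (by omega) rfl (by omega)
  rw [← hcc]; exact hc'C

/-- The main local contradiction: a corner codeword away from the edge together with
the forced edge codeword leave a point that no codeword can cover. -/
lemma core {e ℓ : ℤ} (he : 1 ≤ e) {C : Set (Fin 3 → ℤ)} (hC : IsPerfectCode 2 ℓ e C)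
    {c : Fin 3 → ℤ} (hcC : c ∈ C) (hc0 : c 0 = ℓ - c 1 - c 2) (hc1 : 0 ≤ c 1)
    (hc2 : 0 ≤ c 2) (hse : c 1 + c 2 ≤ e) (hb1 : c 1 ≤ e - 1)
    (hc' : ![ℓ - c 2 - 2*e - 1, 0, c 2 + 2*e + 1] ∈ C) : False := by
  have hl : 0 ≤ ℓ - c 2 - 2*e - 1 := by
    have := (mem_simplex3.mp (hC.1 hc')).1
    simpa using this
  have hWm : (![ℓ - e - (c 1 + c 2) - 1, c 1 + 1, e + c 2] : Fin 3 → ℤ) ∈ simplex 2 ℓ :=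
    mem_simplex_vec (by omega)
  have hcW : ¬ sdist c ![ℓ - e - (c 1 + c 2) - 1, c 1 + 1, e + c 2] ≤ e := by
    rw [sdist3]; simp; omega
  have hc'W : ¬ sdist ![ℓ - c 2 - 2*e - 1, 0, c 2 + 2*e + 1]
      ![ℓ - e - (c 1 + c 2) - 1, c 1 + 1, e + c 2] ≤ e := by
    rw [sdist3]; simp; omega
  obtain ⟨x, hxC, hxW⟩ := cover_exists hC hWm
  have hxc : x ≠ c := by rintro rfl; exact hcW hxW
  have hxc' : x ≠ ![ℓ - c 2 - 2*e - 1, 0, c 2 + 2*e + 1] := by rintro rfl; exact hc'W hxW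
  obtain ⟨hx0, hx1, hx2, hxsum⟩ := mem_simplex3.mp (hC.1 hxC)
  have hP1 : ¬ sdist x ![ℓ - e - (c 1 + c 2), c 1, e + c 2] ≤ e := by
    intro h
    exact hxc (unique_cover hC hxC hcC (mem_simplex_vec (by omega)) h
      (by rw [sdist3]; simp; omega))
  have hP2 : ¬ sdist x ![ℓ - e - (c 1 + c 2), c 1 + 1, e + c 2 - 1] ≤ e := by
    intro h
    exact hxc (unique_cover hC hxC hcC (mem_simplex_vec (by omega)) h
      (by rw [sdist3]; simp; omega))
  have hP3 : ¬ sdist x ![ℓ - e - (c 1 + c 2) - 1, c 1, e + c 2 + 1] ≤ e := by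
    intro h
    exact hxc' (unique_cover hC hxC hc' (mem_simplex_vec (by omega)) h
      (by rw [sdist3]; simp; omega))
  have hP4 : ¬ sdist x ![ℓ - e - (c 1 + c 2) - 2, c 1 + 1, e + c 2 + 1] ≤ e := by
    intro h
    exact hxc' (unique_cover hC hxC hc' (mem_simplex_vec (by omega)) h
      (by rw [sdist3]; simp; omega))
  rw [sdist3] at hxW hP1 hP2 hP3 hP4
  simp at hxW hP1 hP2 hP3 hP4
  omega

lemma branch {e ℓ : ℤ} (he : 1 ≤ e) {C : Set (Fin 3 → ℤ)} (hC : IsPerfectCode 2 ℓ e C)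
    {c : Fin 3 → ℤ} (hcC : c ∈ C) (hc0 : c 0 = ℓ - c 1 - c 2) (hc1 : 0 ≤ c 1)
    (hc2 : 0 ≤ c 2) (hse : c 1 + c 2 ≤ e) (hb1 : c 1 ≤ e - 1) (hb2 : c 2 ≤ e - 1)
    (hB : c 2 + e + 1 ≤ ℓ) : False := by
  have hCs := perfect_sw hC
  have hcCs : sw c ∈ sw ⁻¹' C := by
    rw [Set.mem_preimage, sw_sw]; exact hcC
  have h0s : sw c 0 = ℓ - sw c 1 - sw c 2 := by simp only [sw0, sw1, sw2]; omega
  by_cases h1 : 1 ≤ c 1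
  · obtain ⟨q, hq0, hqe, hqC, hqz⟩ := lemE he hC hcC hc0 hc1 hc2 hse hB
    rw [hqz h1] at hqC
    have hqC' : (![ℓ - c 2 - 2*e - 1, 0, c 2 + 2*e + 1] : Fin 3 → ℤ) ∈ C := by
      simpa using hqC
    exact core he hC hcC hc0 hc1 hc2 hse hb1 hqC'
  · have hc10 : c 1 = 0 := by omega
    by_cases h2 : 1 ≤ c 2
    · obtain ⟨q, hq0, hqe, hqC, hqz⟩ := lemE he hCs hcCs h0s
        (by simp only [sw1]; omega) (by simp only [sw2]; omega)
        (by simp only [sw1, sw2]; omega) (by simp only [sw2]; omega)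
      rw [hqz (by simp only [sw1]; omega)] at hqC
      have hqC' : (![ℓ - sw c 2 - 2*e - 1, 0, sw c 2 + 2*e + 1] : Fin 3 → ℤ) ∈ sw ⁻¹' C := by
        simpa using hqC
      exact core he hCs hcCs h0s (by simp only [sw1]; omega) (by simp only [sw2]; omega)
        (by simp only [sw1, sw2]; omega) (by simp only [sw1]; omega) hqC'
    · have hc20 : c 2 = 0 := by omega
      obtain ⟨q, hq0, hqe, hqC, -⟩ := lemE he hC hcC hc0 hc1 hc2 hse hB
      by_cases hq : q = 0
      · rw [hq] at hqC
        have hqC' : (![ℓ - c 2 - 2*e - 1, 0, c 2 + 2*e + 1] : Fin 3 → ℤ) ∈ C := by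
          simpa using hqC
        exact core he hC hcC hc0 hc1 hc2 hse hb1 hqC'
      · obtain ⟨q', hq'0, hq'e, hq'C, -⟩ := lemE he hCs hcCs h0s
          (by simp only [sw1]; omega) (by simp only [sw2]; omega)
          (by simp only [sw1, sw2]; omega) (by simp only [sw2]; omega)
        have hyC : sw (![ℓ - sw c 2 - 2*e - 1, q', sw c 2 + 2*e + 1 - q'] : Fin 3 → ℤ) ∈ C :=
          Set.mem_preimage.mp hq'C
        have hl : 0 ≤ ℓ - c 2 - 2*e - 1 := by
          have := (mem_simplex3.mp (hC.1 hqC)).1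
          simpa using this
        have hwm : (![ℓ - 2*e - 1, e + 1 - q', e + q'] : Fin 3 → ℤ) ∈ simplex 2 ℓ :=
          mem_simplex_vec (by omega)
        have hd1 : sdist ![ℓ - c 2 - 2*e - 1, q, c 2 + 2*e + 1 - q]
            ![ℓ - 2*e - 1, e + 1 - q', e + q'] ≤ e := by
          rw [sdist3]; simp; omega
        have hd2 : sdist (sw ![ℓ - sw c 2 - 2*e - 1, q', sw c 2 + 2*e + 1 - q'])
            ![ℓ - 2*e - 1, e + 1 - q', e + q'] ≤ e := by
          rw [sdist3]; simp; omega
        have heq2 := unique_cover hC hqC hyC hwm hd1 hd2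
        have hco := congrFun heq2 1
        simp at hco
        omega

theorem stmt_13 (e ℓ : ℤ) (he : 1 ≤ e) (C : Set (Fin 3 → ℤ))
    (hC : IsPerfectCode 2 ℓ e C) (hnt : C.Nontrivial) :
    ![ℓ - e, e, 0] ∈ C ∨ ![ℓ - e, 0, e] ∈ C := by
  obtain ⟨a, haC, b, hbC, hab⟩ := hnt
  obtain ⟨ha0, ha1, ha2, hasum⟩ := mem_simplex3.mp (hC.1 haC)
  have hVm : (![ℓ, 0, 0] : Fin 3 → ℤ) ∈ simplex 2 ℓ := mem_simplex_vec (by omega)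
  obtain ⟨c, hcC, hcV⟩ := cover_exists hC hVm
  obtain ⟨hcs0, hcs1, hcs2, hcsum⟩ := mem_simplex3.mp (hC.1 hcC)
  have hc0 : c 0 = ℓ - c 1 - c 2 := by omega
  rw [sdist3] at hcV; simp at hcV
  have hse : c 1 + c 2 ≤ e := by omega
  have hzex : ∃ z ∈ C, ¬ sdist c z ≤ e := by
    by_cases h : a = c
    · refine ⟨b, hbC, fun hd => hab ?_⟩
      have hbs := hC.1 hbC
      have hself : sdist b b ≤ e := by rw [sdist3]; omega
      have hcb := unique_cover hC hcC hbC hbs hd hself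
      rw [h, hcb]
    · refine ⟨a, haC, fun hd => h ?_⟩
      have has := hC.1 haC
      have hself : sdist a a ≤ e := by rw [sdist3]; omega
      exact unique_cover hC haC hcC has hself hd
  obtain ⟨z, hzC, hzf⟩ := hzex
  obtain ⟨hz0, hz1, hz2, hzsum⟩ := mem_simplex3.mp (hC.1 hzC)
  have hclaim : c 1 + e + 1 ≤ ℓ ∨ c 2 + e + 1 ≤ ℓ := by
    by_contra h
    push_neg at h
    exact hzf (by rw [sdist3]; omega)
  by_cases hg1 : c 1 = e ∧ c 2 = 0
  · left
    have hcv : c = ![ℓ - e, e, 0] := vec_eq (by omega) hg1.1 hg1.2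
    rwa [← hcv]
  by_cases hg2 : c 1 = 0 ∧ c 2 = e
  · right
    have hcv : c = ![ℓ - e, 0, e] := vec_eq (by omega) hg2.1 hg2.2
    rwa [← hcv]
  exfalso
  have hb1e : c 1 ≤ e - 1 := by
    by_contra hx
    exact hg1 ⟨by omega, by omega⟩
  have hb2e : c 2 ≤ e - 1 := by
    by_contra hx
    exact hg2 ⟨by omega, by omega⟩
  rcases hclaim with hA | hB
  · have hCs := perfect_sw hC
    have hcCs : sw c ∈ sw ⁻¹' C := by rw [Set.mem_preimage, sw_sw]; exact hcC
    exact branch he hCs hcCs (by simp only [sw0, sw1, sw2]; omega)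
      (by simp only [sw1]; omega) (by simp only [sw2]; omega)
      (by simp only [sw1, sw2]; omega) (by simp only [sw1]; omega)
      (by simp only [sw2]; omega) (by simp only [sw2]; omega)
  · exact branch he hC hcC hc0 hcs1 hcs2 hse hb1e hb2e hB
end

section
/- For every integer e ≥ 1 and every integer ℓ ≥ 0 with ℓ ≠ 3e + 1, there is no nontrivial e-perfect code in the discrete 2-simplex Δ_ℓ^2. -/
def cov (e a b ci ck : ℤ) : Prop :=
  ci - a ≤ e ∧ a - ci ≤ e ∧ ck - b ≤ e ∧ b - ck ≤ e ∧ ci + ck - (a + b) ≤ e ∧ a + b - (ci + ck) ≤ e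

lemma sum3 (x : Fin 3 → ℤ) (i j k : Fin 3) (hij : i ≠ j) (hik : i ≠ k) (hjk : j ≠ k) :
    x i + x j + x k = x 0 + x 1 + x 2 := by
  fin_cases i <;> fin_cases j <;> fin_cases k <;> simp_all <;> ring

lemma sdist3_s14 (c x : Fin 3 → ℤ) (i j k : Fin 3) (hij : i ≠ j) (hik : i ≠ k) (hjk : j ≠ k) :
    sdist c x = max (c i - x i) 0 + max (c j - x j) 0 + max (c k - x k) 0 := by
  fin_cases i <;> fin_cases j <;> fin_cases k <;> simp_all [sdist, Fin.sum_univ_three] <;> ring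

lemma sdist_le_iff (e ℓ : ℤ) (c x : Fin 3 → ℤ) (i j k : Fin 3)
    (hij : i ≠ j) (hik : i ≠ k) (hjk : j ≠ k)
    (hc : c i + c j + c k = ℓ) (hx : x i + x j + x k = ℓ) :
    sdist c x ≤ e ↔ cov e (x i) (x k) (c i) (c k) := by
  rw [sdist3_s14 c x i j k hij hik hjk]; simp only [cov]; omega

section Main

variable {e ℓ : ℤ} {C : Set (Fin 3 → ℤ)}

lemma cw_facts (hC : IsPerfectCode 2 ℓ e C) {z : Fin 3 → ℤ} (hz : z ∈ C)
    (i j k : Fin 3) (hij : i ≠ j) (hik : i ≠ k) (hjk : j ≠ k) :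
    0 ≤ z i ∧ 0 ≤ z j ∧ 0 ≤ z k ∧ z i + z j + z k = ℓ := by
  obtain ⟨hpos, hsum⟩ := hC.1 hz
  rw [Fin.sum_univ_three] at hsum
  exact ⟨hpos i, hpos j, hpos k, by rw [sum3 z i j k hij hik hjk]; exact hsum⟩

lemma pf (hC : IsPerfectCode 2 ℓ e C)
    (i j k : Fin 3) (hij : i ≠ j) (hik : i ≠ k) (hjk : j ≠ k)
    (a b : ℤ) (ha : 0 ≤ a) (hb : 0 ≤ b) (hab : a + b ≤ ℓ) :
    ∃ z ∈ C, cov e a b (z i) (z k) ∧ ∀ y ∈ C, cov e a b (y i) (y k) → y = z := by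
  classical
  set x : Fin 3 → ℤ := fun m => if m = i then a else if m = k then b else ℓ - a - b with hxdef
  have hxi : x i = a := by simp [hxdef]
  have hxk : x k = b := by simp [hxdef, Ne.symm hik]
  have hxj : x j = ℓ - a - b := by simp [hxdef, Ne.symm hij, hjk]
  have hxs : x i + x j + x k = ℓ := by rw [hxi, hxj, hxk]; ring
  have hxmem : x ∈ simplex 2 ℓ := by
    constructor
    · intro m
      by_cases h1 : m = i
      · rw [h1, hxi]; exact ha
      · by_cases h2 : m = k
        · rw [h2, hxk]; exact hb
        · have : x m = ℓ - a - b := by simp [hxdef, h1, h2]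
          omega
    · show ∑ m, x m = ℓ
      rw [Fin.sum_univ_three, ← sum3 x i j k hij hik hjk, hxs]
  obtain ⟨z, ⟨hzC, hzd⟩, huniq⟩ := hC.2 x hxmem
  have hzf := cw_facts hC hzC i j k hij hik hjk
  refine ⟨z, hzC, ?_, ?_⟩
  · have := (sdist_le_iff e ℓ z x i j k hij hik hjk hzf.2.2.2 hxs).mp hzd
    rwa [hxi, hxk] at this
  · intro y hy hcov
    have hyf := cw_facts hC hy i j k hij hik hjk
    exact huniq y ⟨hy, (sdist_le_iff e ℓ y x i j k hij hik hjk hyf.2.2.2 hxs).mpr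
      (by rwa [hxi, hxk])⟩

end Main

section Main2

variable {e ℓ : ℤ} {C : Set (Fin 3 → ℤ)}

/-- The junction lemma: at a junction on the bottom edge (row 0) between consecutive
codewords `u` (covering cell `p`) and `v` (covering cell `p+1`), the "heights"
`(u k, v k)` must be `(0, e)` or `(e, 0)`, with forced horizontal positions. -/
lemma JL (hC : IsPerfectCode 2 ℓ e C) (he : 1 ≤ e)
    (i j k : Fin 3) (hij : i ≠ j) (hik : i ≠ k) (hjk : j ≠ k)
    {u v : Fin 3 → ℤ} (hu : u ∈ C) (hv : v ∈ C) (p : ℤ) (hp0 : 0 ≤ p) (hpl : p + 1 ≤ ℓ)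
    (hcu : cov e p 0 (u i) (u k)) (hcv : cov e (p+1) 0 (v i) (v k))
    (hUu : ∀ y ∈ C, cov e p 0 (y i) (y k) → y = u)
    (hUv : ∀ y ∈ C, cov e (p+1) 0 (y i) (y k) → y = v)
    (hnu : ¬ cov e (p+1) 0 (u i) (u k)) :
    (u k = 0 ∧ v k = e ∧ u i = p - e ∧ v i = p + 1) ∨
    (u k = e ∧ v k = 0 ∧ u i = p - e ∧ v i = p + 1 + e) := by
  obtain ⟨hu0, hu1, hu2, husum⟩ := cw_facts hC hu i j k hij hik hjk
  obtain ⟨hv0, hv1, hv2, hvsum⟩ := cw_facts hC hv i j k hij hik hjk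
  have huv : u ≠ v := fun h => hnu (h ▸ hcv)
  have hnv : ¬ cov e p 0 (v i) (v k) := fun h => huv ((hUu v hv h).symm)
  have hui : u i = p - e := by simp only [cov] at hcu hnu; omega
  have hvik : v i + v k = p + 1 + e := by simp only [cov] at hcv hnv; omega
  have hple : p + 1 + e ≤ ℓ := by omega
  -- (a) not both heights ≥ 1
  have hNotBoth : ¬(1 ≤ u k ∧ 1 ≤ v k) := by
    rintro ⟨h1, h2⟩
    obtain ⟨z, hzC, hzcov, hzU⟩ := pf hC i j k hij hik hjk p 1 hp0 (by omega) (by omega)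
    have h3 : cov e p 1 (u i) (u k) := by simp only [cov] at hcu ⊢; omega
    have h4 : cov e p 1 (v i) (v k) := by simp only [cov] at hcv ⊢; omega
    have huveq : u = v := (hzU u hu h3).trans (hzU v hv h4).symm
    have e1 := congrFun huveq i
    have e2 := congrFun huveq k
    simp only [cov] at hcv
    omega
  rcases eq_or_lt_of_le hu2 with hk0 | hk1
  · -- u k = 0
    rcases eq_or_lt_of_le hv2 with hvk0 | hvk1
    · -- (b) both zero: impossible
      exfalso
      have hvi : v i = p + 1 + e := by omega
      obtain ⟨z, hzC, hzcov, hzU⟩ := pf hC i j k hij hik hjk p 1 hp0 (by omega) (by omega)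
      obtain ⟨hz0, hz1, hz2, hzsum⟩ := cw_facts hC hzC i j k hij hik hjk
      have hzu : z ≠ u := by
        intro h; rw [h] at hzcov; simp only [cov] at hzcov; omega
      have hzv : z ≠ v := by
        intro h; rw [h] at hzcov; simp only [cov] at hzcov; omega
      have hnl : ¬ cov e p 0 (z i) (z k) := fun h => hzu (hUu z hzC h)
      have hBv : cov e (p+1) 1 (v i) (v k) := by simp only [cov]; omega
      obtain ⟨z3, hz3C, hz3cov, hz3U⟩ := pf hC i j k hij hik hjk (p+1) 1 (by omega) (by omega) (by omega)
      have hnr : ¬ cov e (p+1) 1 (z i) (z k) :=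
        fun h => hzv ((hz3U z hzC h).trans (hz3U v hv hBv).symm)
      have hzpos : z i = p - e ∧ z k = e + 1 := by
        simp only [cov] at hzcov hnl hnr; omega
      have hAu : cov e (p-1) 1 (u i) (u k) := by simp only [cov]; omega
      have hAz : cov e (p-1) 1 (z i) (z k) := by simp only [cov]; omega
      obtain ⟨z4, hz4C, hz4cov, hz4U⟩ := pf hC i j k hij hik hjk (p-1) 1 (by omega) (by omega) (by omega)
      have : z = u := (hz4U z hzC hAz).trans (hz4U u hu hAu).symm
      have := congrFun this k
      omega
    · -- (d) u k = 0, v k ≥ 1 : show v k = e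
      left
      have hvkeq : v k = e := by
        by_contra hne'
        have hvke : v k ≤ e - 1 := by simp only [cov] at hcv; omega
        set t := v k with ht
        set q := p - t with hq
        obtain ⟨z, hzC, hzcov, hzU⟩ := pf hC i j k hij hik hjk q (t+1) (by omega) (by omega) (by omega)
        obtain ⟨hz0, hz1, hz2, hzsum⟩ := cw_facts hC hzC i j k hij hik hjk
        have hzu : z ≠ u := by
          intro h; rw [h] at hzcov; simp only [cov] at hzcov; omega
        have hzv : z ≠ v := by
          intro h; rw [h] at hzcov; simp only [cov] at hzcov; omega
        have hAu : cov e (q-1) (t+1) (u i) (u k) := by simp only [cov]; omega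
        have hBv : cov e (q+1) (t+1) (v i) (v k) := by simp only [cov]; omega
        obtain ⟨z1', hz1C, hz1cov, hz1U⟩ := pf hC i j k hij hik hjk (q-1) (t+1) (by omega) (by omega) (by omega)
        obtain ⟨z2', hz2C, hz2cov, hz2U⟩ := pf hC i j k hij hik hjk (q+1) (t+1) (by omega) (by omega) (by omega)
        have hnl : ¬ cov e (q-1) (t+1) (z i) (z k) :=
          fun h => hzu ((hz1U z hzC h).trans (hz1U u hu hAu).symm)
        have hnr : ¬ cov e (q+1) (t+1) (z i) (z k) :=
          fun h => hzv ((hz2U z hzC h).trans (hz2U v hv hBv).symm)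
        simp only [cov] at hzcov hnl hnr; omega
      exact ⟨hk0.symm, hvkeq, hui, by omega⟩
  · -- u k ≥ 1 : v k = 0, and show u k = e
    have hvk0 : v k = 0 := by
      rcases eq_or_lt_of_le hv2 with h | h
      · omega
      · exact absurd ⟨by omega, by omega⟩ hNotBoth
    right
    refine ⟨?_, hvk0, hui, by omega⟩
    -- (c) u k = e
    by_contra hne'
    have huke : u k ≤ e - 1 := by simp only [cov] at hcu; omega
    set t := u k with ht
    obtain ⟨z, hzC, hzcov, hzU⟩ := pf hC i j k hij hik hjk p (t+1) (by omega) (by omega) (by omega)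
    obtain ⟨hz0, hz1, hz2, hzsum⟩ := cw_facts hC hzC i j k hij hik hjk
    have hzu : z ≠ u := by
      intro h; rw [h] at hzcov; simp only [cov] at hzcov; omega
    have hzv : z ≠ v := by
      intro h; rw [h] at hzcov; simp only [cov] at hzcov; omega
    have hAu : cov e (p-1) (t+1) (u i) (u k) := by simp only [cov]; omega
    have hBv : cov e (p+1) (t+1) (v i) (v k) := by simp only [cov]; omega
    obtain ⟨z1', hz1C, hz1cov, hz1U⟩ := pf hC i j k hij hik hjk (p-1) (t+1) (by omega) (by omega) (by omega)
    obtain ⟨z2', hz2C, hz2cov, hz2U⟩ := pf hC i j k hij hik hjk (p+1) (t+1) (by omega) (by omega) (by omega)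
    have hnl : ¬ cov e (p-1) (t+1) (z i) (z k) :=
      fun h => hzu ((hz1U z hzC h).trans (hz1U u hu hAu).symm)
    have hnr : ¬ cov e (p+1) (t+1) (z i) (z k) :=
      fun h => hzv ((hz2U z hzC h).trans (hz2U v hv hBv).symm)
    simp only [cov] at hzcov hnl hnr; omega

end Main2

section Main3

variable {e ℓ : ℤ} {C : Set (Fin 3 → ℤ)}

set_option maxHeartbeats 2000000 in
/-- Claim J: a (0,e)-junction can only occur at the left end of the bottom row. -/
lemma CJ (hC : IsPerfectCode 2 ℓ e C) (he : 1 ≤ e)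
    (i j k : Fin 3) (hij : i ≠ j) (hik : i ≠ k) (hjk : j ≠ k)
    {u v : Fin 3 → ℤ} (hu : u ∈ C) (hv : v ∈ C) (p : ℤ) (hp0 : 0 ≤ p) (hpl : p + 1 ≤ ℓ)
    (hcu : cov e p 0 (u i) (u k)) (hcv : cov e (p+1) 0 (v i) (v k))
    (hUu : ∀ y ∈ C, cov e p 0 (y i) (y k) → y = u)
    (hUv : ∀ y ∈ C, cov e (p+1) 0 (y i) (y k) → y = v)
    (huk : u k = 0) (hvk : v k = e) : u i ≤ e := by
  obtain ⟨hu0, hu1, hu2, husum⟩ := cw_facts hC hu i j k hij hik hjk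
  obtain ⟨hv0, hv1, hv2, hvsum⟩ := cw_facts hC hv i j k hij hik hjk
  have huv : u ≠ v := fun h => by have := congrFun h k; omega
  have hnu : ¬ cov e (p+1) 0 (u i) (u k) := fun h => huv (hUv u hu h)
  have hnv : ¬ cov e p 0 (v i) (v k) := fun h => huv ((hUu v hv h).symm)
  have hui : u i = p - e := by simp only [cov] at hcu hnu; omega
  have hvi : v i = p + 1 := by simp only [cov] at hcv hnv; omega
  have hple : p + 1 + e ≤ ℓ := by omega
  by_contra hcon
  push_neg at hcon
  -- the codeword w left of u on the bottom row
  obtain ⟨w, hwC, hwcov, hwU⟩ := pf hC i j k hij hik hjk (p-2*e-1) 0 (by omega) le_rfl (by omega)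
  obtain ⟨hw0, hw1, hw2, hwsum⟩ := cw_facts hC hwC i j k hij hik hjk
  have hwu : w ≠ u := fun h => by rw [h] at hwcov; simp only [cov] at hwcov; omega
  have hAu : cov e (p-2*e-1+1) 0 (u i) (u k) := by simp only [cov]; omega
  obtain ⟨z1, hz1C, hz1cov, hz1U⟩ := pf hC i j k hij hik hjk (p-2*e-1+1) 0 (by omega) le_rfl (by omega)
  have hUu2 : ∀ y ∈ C, cov e (p-2*e-1+1) 0 (y i) (y k) → y = u :=
    fun y hy hcy => (hz1U y hy hcy).trans (hz1U u hu hAu).symm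
  have hnw : ¬ cov e (p-2*e-1+1) 0 (w i) (w k) := fun h => hwu (hUu2 w hwC h)
  have hJ := JL hC he i j k hij hik hjk hwC hu (p-2*e-1) (by omega) (by omega)
    hwcov hAu hwU hUu2 hnw
  have hwk : w k = e ∧ w i = p - 3*e - 1 := by
    rcases hJ with ⟨h1, h2, h3, h4⟩ | ⟨h1, h2, h3, h4⟩
    · omega
    · constructor; · exact h1
      omega
  -- z := codeword of cell (p-e, e+1)
  obtain ⟨z, hzC, hzcov, hzU⟩ := pf hC i j k hij hik hjk (p-e) (e+1) (by omega) (by omega) (by omega)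
  obtain ⟨hza, hzb, hzc, hzsum⟩ := cw_facts hC hzC i j k hij hik hjk
  have hzv : z ≠ v := fun h => by rw [h] at hzcov; simp only [cov] at hzcov; omega
  have hzu : z ≠ u := fun h => by rw [h] at hzcov; simp only [cov] at hzcov; omega
  have hBv : cov e (p-e+1) (e+1) (v i) (v k) := by simp only [cov]; omega
  obtain ⟨z2, hz2C, hz2cov, hz2U⟩ := pf hC i j k hij hik hjk (p-e+1) (e+1) (by omega) (by omega) (by omega)
  have hnr : ¬ cov e (p-e+1) (e+1) (z i) (z k) :=
    fun h => hzv ((hz2U z hzC h).trans (hz2U v hv hBv).symm)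
  have hCu : cov e (p-e) e (u i) (u k) := by simp only [cov]; omega
  obtain ⟨z3, hz3C, hz3cov, hz3U⟩ := pf hC i j k hij hik hjk (p-e) e (by omega) (by omega) (by omega)
  have hnd : ¬ cov e (p-e) e (z i) (z k) :=
    fun h => hzu ((hz3U z hzC h).trans (hz3U u hu hCu).symm)
  have hz' : z i = p - 2*e ∧ z k = 2*e+1 := by
    simp only [cov] at hzcov hnr hnd; omega
  -- y := codeword of cell (p-2e-1, e+1)
  obtain ⟨y, hyC, hycov, hyU⟩ := pf hC i j k hij hik hjk (p-2*e-1) (e+1) (by omega) (by omega) (by omega)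
  obtain ⟨hya, hyb, hyc, hysum⟩ := cw_facts hC hyC i j k hij hik hjk
  have hyw : y ≠ w := fun h => by
    rw [h] at hycov; simp only [cov] at hycov; omega
  have hyz : y ≠ z := fun h => by
    rw [h] at hycov; simp only [cov] at hycov; omega
  have hDw : cov e (p-2*e-2) (e+1) (w i) (w k) := by simp only [cov]; omega
  obtain ⟨z4, hz4C, hz4cov, hz4U⟩ := pf hC i j k hij hik hjk (p-2*e-2) (e+1) (by omega) (by omega) (by omega)
  have hnl : ¬ cov e (p-2*e-2) (e+1) (y i) (y k) :=
    fun h => hyw ((hz4U y hyC h).trans (hz4U w hwC hDw).symm)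
  have hEz : cov e (p-2*e) (e+1) (z i) (z k) := by simp only [cov]; omega
  obtain ⟨z5, hz5C, hz5cov, hz5U⟩ := pf hC i j k hij hik hjk (p-2*e) (e+1) (by omega) (by omega) (by omega)
  have hnr2 : ¬ cov e (p-2*e) (e+1) (y i) (y k) :=
    fun h => hyz ((hz5U y hyC h).trans (hz5U z hzC hEz).symm)
  simp only [cov] at hycov hnl hnr2
  omega

/-- Mirror of Claim J: an (e,0)-junction can only occur at the right end of the bottom row. -/
lemma CJ' (hC : IsPerfectCode 2 ℓ e C) (he : 1 ≤ e)
    (i j k : Fin 3) (hij : i ≠ j) (hik : i ≠ k) (hjk : j ≠ k)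
    {u v : Fin 3 → ℤ} (hu : u ∈ C) (hv : v ∈ C) (p : ℤ) (hp0 : 0 ≤ p) (hpl : p + 1 ≤ ℓ)
    (hcu : cov e p 0 (u i) (u k)) (hcv : cov e (p+1) 0 (v i) (v k))
    (hUu : ∀ y ∈ C, cov e p 0 (y i) (y k) → y = u)
    (hUv : ∀ y ∈ C, cov e (p+1) 0 (y i) (y k) → y = v)
    (huk : u k = e) (hvk : v k = 0) : ℓ ≤ v i + e := by
  obtain ⟨hu0, hu1, hu2, husum⟩ := cw_facts hC hu i j k hij hik hjk
  obtain ⟨hv0, hv1, hv2, hvsum⟩ := cw_facts hC hv i j k hij hik hjk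
  have hcv' : cov e (ℓ - p - 1) 0 (v j) (v k) := by simp only [cov] at hcv ⊢; omega
  have hcu' : cov e (ℓ - p - 1 + 1) 0 (u j) (u k) := by simp only [cov] at hcu ⊢; omega
  have hUv' : ∀ y ∈ C, cov e (ℓ - p - 1) 0 (y j) (y k) → y = v := by
    intro y hy hcy
    obtain ⟨hy0, hy1, hy2, hysum⟩ := cw_facts hC hy i j k hij hik hjk
    exact hUv y hy (by simp only [cov] at hcy ⊢; omega)
  have hUu' : ∀ y ∈ C, cov e (ℓ - p - 1 + 1) 0 (y j) (y k) → y = u := by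
    intro y hy hcy
    obtain ⟨hy0, hy1, hy2, hysum⟩ := cw_facts hC hy i j k hij hik hjk
    exact hUu y hy (by simp only [cov] at hcy ⊢; omega)
  have := CJ hC he j i k (Ne.symm hij) hjk hik hv hu (ℓ - p - 1) (by omega) (by omega)
    hcv' hcu' hUv' hUu' hvk huk
  omega

end Main3

section Final

variable {e ℓ : ℤ} {C : Set (Fin 3 → ℤ)}

lemma main_small (hC : IsPerfectCode 2 ℓ e C) (he : 1 ≤ e) (hl0 : 0 ≤ ℓ) (hl2 : ℓ ≤ 2*e)
    (hnt : C.Nontrivial) : False := by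
  classical
  obtain ⟨c, hc, c', hc', hne⟩ := hnt
  obtain ⟨hc0, hc1, hc2, hcsum⟩ := cw_facts hC hc 0 1 2 (by decide) (by decide) (by decide)
  obtain ⟨hd0, hd1, hd2, hdsum⟩ := cw_facts hC hc' 0 1 2 (by decide) (by decide) (by decide)
  set a : ℤ := (c 0 + c' 0 + 1) / 2 with ha
  set b : ℤ := (c 1 + c' 1) / 2 with hb
  set w : Fin 3 → ℤ := fun m => if m = 0 then a else if m = 1 then b else ℓ - a - b with hw
  have hw0 : w 0 = a := rfl
  have hw1 : w 1 = b := rfl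
  have hw2 : w 2 = ℓ - a - b := rfl
  have hwsum : w 0 + w 1 + w 2 = ℓ := by rw [hw0, hw1, hw2]; ring
  have hwmem : w ∈ simplex 2 ℓ := by
    constructor
    · intro m
      by_cases h0 : m = 0
      · subst h0; rw [hw0]; omega
      · by_cases h1 : m = 1
        · subst h1; rw [hw1]; omega
        · have hm : w m = ℓ - a - b := by simp [hw, h0, h1]
          omega
    · show ∑ m, w m = ℓ
      rw [Fin.sum_univ_three, hwsum]
  have hcw : sdist c w ≤ e := by
    rw [sdist_le_iff e ℓ c w 0 1 2 (by decide) (by decide) (by decide) hcsum hwsum]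
    rw [hw0, hw2]; simp only [cov]; omega
  have hdw : sdist c' w ≤ e := by
    rw [sdist_le_iff e ℓ c' w 0 1 2 (by decide) (by decide) (by decide) hdsum hwsum]
    rw [hw0, hw2]; simp only [cov]; omega
  obtain ⟨z, _, hzU⟩ := hC.2 w hwmem
  exact hne ((hzU c ⟨hc, hcw⟩).trans (hzU c' ⟨hc', hdw⟩).symm)

lemma main_big (hC : IsPerfectCode 2 ℓ e C) (he : 1 ≤ e) (hl : 2*e + 1 ≤ ℓ)
    (hne : ℓ ≠ 3*e + 1) : False := by
  have d01 : (0 : Fin 3) ≠ 1 := by decide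
  have d02 : (0 : Fin 3) ≠ 2 := by decide
  have d12 : (1 : Fin 3) ≠ 2 := by decide
  have d21 : (2 : Fin 3) ≠ 1 := by decide
  have d20 : (2 : Fin 3) ≠ 0 := by decide
  have d10 : (1 : Fin 3) ≠ 0 := by decide
  -- u := codeword covering the corner (0, ℓ, 0)
  obtain ⟨u, huC, hucov, huU⟩ := pf hC 0 1 2 d01 d02 d12 0 0 le_rfl le_rfl (by omega)
  obtain ⟨hua, hub, huc, husum⟩ := cw_facts hC huC 0 1 2 d01 d02 d12
  have hucov' := hucov
  simp only [cov] at hucov'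
  set p : ℤ := u 0 + e with hp
  have hcup : cov e p 0 (u 0) (u 2) := by simp only [cov]; omega
  obtain ⟨z1, hz1C, hz1cov, hz1U⟩ := pf hC 0 1 2 d01 d02 d12 p 0 (by omega) le_rfl (by omega)
  have hUup : ∀ y ∈ C, cov e p 0 (y 0) (y 2) → y = u :=
    fun y hy hcy => (hz1U y hy hcy).trans (hz1U u huC hcup).symm
  obtain ⟨v, hvC, hvcov, hvU⟩ := pf hC 0 1 2 d01 d02 d12 (p+1) 0 (by omega) le_rfl (by omega)
  obtain ⟨hva, hvb, hvc, hvsum⟩ := cw_facts hC hvC 0 1 2 d01 d02 d12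
  have hnu : ¬ cov e (p+1) 0 (u 0) (u 2) := by simp only [cov]; omega
  have hJ := JL hC he 0 1 2 d01 d02 d12 huC hvC p (by omega) (by omega)
    hcup hvcov hUup hvU hnu
  rcases hJ with ⟨hu2, hv2, hui, hvi⟩ | ⟨hu2, hv2, hui, hvi⟩
  · -- Case B: u 2 = 0, v 2 = e, v 0 = p + 1.  Analyze the left edge (frame (2,1,0)).
    have hcuL : cov e e 0 (u 2) (u 0) := by simp only [cov]; omega
    obtain ⟨z2, hz2C, hz2cov, hz2U⟩ := pf hC 2 1 0 d21 d20 d10 e 0 (by omega) le_rfl (by omega)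
    have hUuL : ∀ y ∈ C, cov e e 0 (y 2) (y 0) → y = u :=
      fun y hy hcy => (hz2U y hy hcy).trans (hz2U u huC hcuL).symm
    obtain ⟨u', hu'C, hu'cov, hu'U⟩ := pf hC 2 1 0 d21 d20 d10 (e+1) 0 (by omega) le_rfl (by omega)
    obtain ⟨hu'a, hu'b, hu'c, hu'sum⟩ := cw_facts hC hu'C 0 1 2 d01 d02 d12
    have hnuL : ¬ cov e (e+1) 0 (u 2) (u 0) := by simp only [cov]; omega
    have hJ2 := JL hC he 2 1 0 d21 d20 d10 huC hu'C e (by omega) (by omega)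
      hcuL hu'cov hUuL hu'U hnuL
    rcases hJ2 with ⟨hu0L, hu'0, hu2L, hu'2⟩ | ⟨hu0L, hu'0, hu2L, hu'2⟩
    · -- B2 : u 0 = 0; then v and u' are distinct codewords both covering cell (e, e+1)
      have hA : cov e e (e+1) (v 0) (v 2) := by simp only [cov]; omega
      have hB : cov e e (e+1) (u' 0) (u' 2) := by simp only [cov]; omega
      obtain ⟨z6, hz6C, hz6cov, hz6U⟩ := pf hC 0 1 2 d01 d02 d12 e (e+1) (by omega) (by omega) (by omega)
      have : v = u' := (hz6U v hvC hA).trans (hz6U u' hu'C hB).symm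
      have := congrFun this 2
      omega
    · -- B1 : u 0 = e; mirror Claim J on the left edge forces ℓ ≤ 3e+1, but ℓ ≥ 3e+1
      have hCJ := CJ' hC he 2 1 0 d21 d20 d10 huC hu'C e (by omega) (by omega)
        hcuL hu'cov hUuL hu'U (by omega) (by omega)
      omega
  · -- Case A: u 2 = e, v 2 = 0, v 0 = p + 1 + e; here u 0 = 0, p = e, v 0 = 2e+1
    have hCJ := CJ' hC he 0 1 2 d01 d02 d12 huC hvC p (by omega) (by omega)
      hcup hvcov hUup hvU (by omega) (by omega)
    -- ℓ ≤ v 0 + e = 3e + 1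
    -- right edge analysis (frame (2,0,1))
    have hcvR : cov e e 0 (v 2) (v 1) := by simp only [cov]; omega
    obtain ⟨z3, hz3C, hz3cov, hz3U⟩ := pf hC 2 0 1 d20 d21 d01 e 0 (by omega) le_rfl (by omega)
    have hUvR : ∀ y ∈ C, cov e e 0 (y 2) (y 1) → y = v :=
      fun y hy hcy => (hz3U y hy hcy).trans (hz3U v hvC hcvR).symm
    obtain ⟨v', hv'C, hv'cov, hv'U⟩ := pf hC 2 0 1 d20 d21 d01 (e+1) 0 (by omega) le_rfl (by omega)
    obtain ⟨hv'a, hv'b, hv'c, hv'sum⟩ := cw_facts hC hv'C 0 1 2 d01 d02 d12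
    have hnvR : ¬ cov e (e+1) 0 (v 2) (v 1) := by simp only [cov]; omega
    have hJ3 := JL hC he 2 0 1 d20 d21 d01 hvC hv'C e (by omega) (by omega)
      hcvR hv'cov hUvR hv'U hnvR
    rcases hJ3 with ⟨hv1R, hv'1, hv2R, hv'2⟩ | ⟨hv1R, hv'1, hv2R, hv'2⟩
    · -- v 1 = 0, so ℓ = 2e+1, and v' = (0, e, e+1), u = (0, e+1, e): double cover at (0, e+1)
      have hA : cov e 0 (e+1) (u 0) (u 2) := by simp only [cov]; omega
      have hB : cov e 0 (e+1) (v' 0) (v' 2) := by simp only [cov]; omega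
      obtain ⟨z7, hz7C, hz7cov, hz7U⟩ := pf hC 0 1 2 d01 d02 d12 0 (e+1) le_rfl (by omega) (by omega)
      have : u = v' := (hz7U u huC hA).trans (hz7U v' hv'C hB).symm
      have := congrFun this 1
      omega
    · -- v 1 = e forces ℓ = 3e+1, excluded
      omega

end Final

theorem stmt_14 (e ℓ : ℤ) (he : 1 ≤ e) (hℓ : 0 ≤ ℓ) (hne : ℓ ≠ 3 * e + 1) :
    ¬ ∃ C : Set (Fin 3 → ℤ), IsPerfectCode 2 ℓ e C ∧ C.Nontrivial := by
  rintro ⟨C, hC, hnt⟩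
  rcases le_or_gt ℓ (2*e) with h | h
  · exact main_small hC he hℓ h hnt
  · exact main_big hC he (by omega) (by omega)
end

section
/- Let e ≥ 1 and let C be a nontrivial e-perfect code in the discrete 2-simplex Δ_ℓ^2 containing the codeword (ℓ − e, 0, e). Then ℓ ≥ 3e + 1, and both (ℓ − 2e − 1, 2e + 1, 0) and (ℓ − 3e − 1, e, 2e + 1) are codewords of C. -/
set_option maxHeartbeats 1000000


lemma mem3 {ℓ a b c : ℤ} :
    (![a, b, c] ∈ simplex 2 ℓ) ↔ (0 ≤ a ∧ 0 ≤ b ∧ 0 ≤ c ∧ a + b + c = ℓ) := by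
  constructor
  · rintro ⟨h1, h2⟩
    rw [Fin.sum_univ_three] at h2
    exact ⟨h1 0, h1 1, h1 2, by simpa using h2⟩
  · rintro ⟨h1, h2, h3, h4⟩
    refine ⟨fun i => ?_, ?_⟩
    · fin_cases i <;> simpa
    · rw [Fin.sum_univ_three]; simpa using h4

lemma mem3' {ℓ : ℤ} {x : Fin 3 → ℤ} (h : x ∈ simplex 2 ℓ) :
    0 ≤ x 0 ∧ 0 ≤ x 1 ∧ 0 ≤ x 2 ∧ x 0 + x 1 + x 2 = ℓ := by
  obtain ⟨h1, h2⟩ := h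
  rw [Fin.sum_univ_three] at h2
  exact ⟨h1 0, h1 1, h1 2, h2⟩

lemma split3 (m0 m1 m2 t : ℤ) (h0 : 0 ≤ m0) (h1 : 0 ≤ m1) (h2 : 0 ≤ m2)
    (ht : 0 ≤ t) (hts : t ≤ m0 + m1 + m2) :
    ∃ r0 r1 r2, 0 ≤ r0 ∧ r0 ≤ m0 ∧ 0 ≤ r1 ∧ r1 ≤ m1 ∧ 0 ≤ r2 ∧ r2 ≤ m2 ∧
      r0 + r1 + r2 = t :=
  ⟨min m0 t, min m1 (t - min m0 t), t - min m0 t - min m1 (t - min m0 t), by omega⟩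

lemma sep {ℓ e : ℤ} (he : 0 ≤ e) {x y : Fin 3 → ℤ}
    (hx : x ∈ simplex 2 ℓ) (hy : y ∈ simplex 2 ℓ) (hd : sdist x y ≤ 2 * e) :
    ∃ z ∈ simplex 2 ℓ, sdist x z ≤ e ∧ sdist y z ≤ e := by
  obtain ⟨hx0, hx1, hx2, hxs⟩ := mem3' hx
  obtain ⟨hy0, hy1, hy2, hys⟩ := mem3' hy
  rw [sdist3] at hd
  obtain ⟨m0, n0, hm0⟩ : ∃ m n : ℤ, 0 ≤ m ∧ 0 ≤ n ∧ m - n = x 0 - y 0 ∧ (m = 0 ∨ n = 0) ∧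
      m = max (x 0 - y 0) 0 := ⟨max (x 0 - y 0) 0, max (y 0 - x 0) 0, by omega⟩
  obtain ⟨m1, n1, hm1⟩ : ∃ m n : ℤ, 0 ≤ m ∧ 0 ≤ n ∧ m - n = x 1 - y 1 ∧ (m = 0 ∨ n = 0) ∧
      m = max (x 1 - y 1) 0 := ⟨max (x 1 - y 1) 0, max (y 1 - x 1) 0, by omega⟩
  obtain ⟨m2, n2, hm2⟩ : ∃ m n : ℤ, 0 ≤ m ∧ 0 ≤ n ∧ m - n = x 2 - y 2 ∧ (m = 0 ∨ n = 0) ∧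
      m = max (x 2 - y 2) 0 := ⟨max (x 2 - y 2) 0, max (y 2 - x 2) 0, by omega⟩
  rw [← hm0.2.2.2.2, ← hm1.2.2.2.2, ← hm2.2.2.2.2] at hd
  obtain ⟨t, ht⟩ : ∃ t : ℤ, 0 ≤ t ∧ t ≤ e ∧ t ≤ m0 + m1 + m2 ∧ m0 + m1 + m2 - t ≤ e ∧
      t ≤ n0 + n1 + n2 := ⟨max (m0 + m1 + m2 - e) 0, by omega⟩
  obtain ⟨r0, r1, r2, hr⟩ := split3 m0 m1 m2 t hm0.1 hm1.1 hm2.1 ht.1 ht.2.2.1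
  obtain ⟨s0, s1, s2, hs⟩ := split3 n0 n1 n2 t hm0.2.1 hm1.2.1 hm2.2.1 ht.1 ht.2.2.2.2
  refine ⟨![x 0 - r0 + s0, x 1 - r1 + s1, x 2 - r2 + s2],
    mem3.mpr ⟨by omega, by omega, by omega, by omega⟩, ?_, ?_⟩ <;>
  · rw [sdist3]
    simp only [Matrix.cons_val_zero, Matrix.cons_val_one, Matrix.head_cons,
      Matrix.cons_val_two, Matrix.tail_cons]
    omega

lemma code_sep {ℓ e : ℤ} (he : 0 ≤ e) {C : Set (Fin 3 → ℤ)}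
    (hC : IsPerfectCode 2 ℓ e C) {c c' : Fin 3 → ℤ} (hc : c ∈ C) (hc' : c' ∈ C)
    (hne : c ≠ c') : 2 * e + 1 ≤ sdist c c' := by
  by_contra h
  push_neg at h
  obtain ⟨z, hz, hcz, hc'z⟩ := sep he (hC.1 hc) (hC.1 hc') (by omega)
  exact hne ((hC.2 z hz).unique ⟨hc, hcz⟩ ⟨hc', hc'z⟩)

theorem stmt_15 (e ℓ : ℤ) (he : 1 ≤ e) (C : Set (Fin 3 → ℤ))
    (hC : IsPerfectCode 2 ℓ e C) (hnt : C.Nontrivial)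
    (hmem : ![ℓ - e, 0, e] ∈ C) :
    3 * e + 1 ≤ ℓ ∧ ![ℓ - 2 * e - 1, 2 * e + 1, 0] ∈ C ∧
      ![ℓ - 3 * e - 1, e, 2 * e + 1] ∈ C := by
  have he0 : (0:ℤ) ≤ e := by omega
  obtain ⟨hsub, hcov⟩ := hC
  have hc0s := mem3.mp (hsub hmem)
  -- ℓ ≥ 2e + 1 from nontriviality
  have hl2 : 2 * e + 1 ≤ ℓ := by
    obtain ⟨u, hu, v, hv, huv⟩ := hnt
    have key : ∀ w ∈ C, w ≠ ![ℓ - e, 0, e] → 2 * e + 1 ≤ ℓ := by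
      intro w hw hwne
      have hsep := code_sep he0 ⟨hsub, hcov⟩ hmem hw (Ne.symm hwne)
      obtain ⟨hw0, hw1, hw2, hws⟩ := mem3' (hsub hw)
      rw [sdist3] at hsep
      simp only [Matrix.cons_val_zero, Matrix.cons_val_one, Matrix.head_cons,
        Matrix.cons_val_two, Matrix.tail_cons] at hsep
      omega
    by_cases h : u = ![ℓ - e, 0, e]
    · exact key v hv (h ▸ huv.symm)
    · exact key u hu h
  -- Step 1: the point p = (ℓ-e-1, e+1, 0)
  have hp : ![ℓ - e - 1, e + 1, 0] ∈ simplex 2 ℓ := mem3.mpr (by omega)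
  obtain ⟨c', ⟨hc'C, hc'd⟩, -⟩ := hcov _ hp
  have hc0p : sdist ![ℓ - e, 0, e] ![ℓ - e - 1, e + 1, 0] = e + 1 := by
    rw [sdist3]
    simp only [Matrix.cons_val_zero, Matrix.cons_val_one, Matrix.head_cons,
      Matrix.cons_val_two, Matrix.tail_cons]
    omega
  have hne1 : ![ℓ - e, 0, e] ≠ c' := by
    intro h
    rw [← h, hc0p] at hc'd
    omega
  have hsep1 := code_sep he0 ⟨hsub, hcov⟩ hmem hc'C hne1
  obtain ⟨ha0, ha1, ha2, has⟩ := mem3' (hsub hc'C)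
  rw [sdist3] at hsep1 hc'd
  simp only [Matrix.cons_val_zero, Matrix.cons_val_one, Matrix.head_cons,
    Matrix.cons_val_two, Matrix.tail_cons] at hsep1 hc'd
  have hc1eq : c' = ![ℓ - 2 * e - 1, 2 * e + 1, 0] := by
    have e0 : c' 0 = ℓ - 2 * e - 1 := by omega
    have e1 : c' 1 = 2 * e + 1 := by omega
    have e2 : c' 2 = 0 := by omega
    funext i
    fin_cases i <;> simp [e0, e1, e2]
  rw [hc1eq] at hc'C
  -- Step 2: the point p2 = (ℓ-2e-1, e, e+1)
  have hp2 : ![ℓ - 2 * e - 1, e, e + 1] ∈ simplex 2 ℓ := mem3.mpr (by omega)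
  obtain ⟨c'', ⟨hc''C, hc''d⟩, -⟩ := hcov _ hp2
  have hd0 : sdist ![ℓ - e, 0, e] ![ℓ - 2 * e - 1, e, e + 1] = e + 1 := by
    rw [sdist3]
    simp only [Matrix.cons_val_zero, Matrix.cons_val_one, Matrix.head_cons,
      Matrix.cons_val_two, Matrix.tail_cons]
    omega
  have hd1 : sdist ![ℓ - 2 * e - 1, 2 * e + 1, 0] ![ℓ - 2 * e - 1, e, e + 1] = e + 1 := by
    rw [sdist3]
    simp only [Matrix.cons_val_zero, Matrix.cons_val_one, Matrix.head_cons,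
      Matrix.cons_val_two, Matrix.tail_cons]
    omega
  have hne2 : ![ℓ - e, 0, e] ≠ c'' := by
    intro h; rw [← h, hd0] at hc''d; omega
  have hne3 : ![ℓ - 2 * e - 1, 2 * e + 1, 0] ≠ c'' := by
    intro h; rw [← h, hd1] at hc''d; omega
  have hsep2 := code_sep he0 ⟨hsub, hcov⟩ hmem hc''C hne2
  have hsep3 := code_sep he0 ⟨hsub, hcov⟩ hc'C hc''C hne3
  obtain ⟨hb0, hb1, hb2, hbs⟩ := mem3' (hsub hc''C)
  rw [sdist3] at hsep2 hsep3 hc''d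
  simp only [Matrix.cons_val_zero, Matrix.cons_val_one, Matrix.head_cons,
    Matrix.cons_val_two, Matrix.tail_cons] at hsep2 hsep3 hc''d
  have hl3 : 3 * e + 1 ≤ ℓ := by omega
  have hc2eq : c'' = ![ℓ - 3 * e - 1, e, 2 * e + 1] := by
    have e0 : c'' 0 = ℓ - 3 * e - 1 := by omega
    have e1 : c'' 1 = e := by omega
    have e2 : c'' 2 = 2 * e + 1 := by omega
    funext i
    fin_cases i <;> simp [e0, e1, e2]
  rw [hc2eq] at hc''C
  exact ⟨hl3, hc'C, hc''C⟩
end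

section
/- Let n ≥ 2, e ≥ 0, let x = (ℓ − t, x_1, …, x_n) ∈ Δ_ℓ^n with t = x_1 + ⋯ + x_n ≤ e, and let v = (ℓ − x_1 − e − 1, x_1 + e + 1, 0, …, 0), assuming ℓ − x_1 − e − 1 ≥ 0 so that v ∈ Δ_ℓ^n. Then every y ∈ Δ_ℓ^n satisfying d(v, y) = e and d(x, y) = 2e + 1 is of the form y = (ℓ − x_1 − 2e − 1, x_1 + e + 1 + u, y_2, …, y_n) for some integer u with 0 ≤ u ≤ e and y_2 + ⋯ + y_n = e − u; moreover, for each i with 2 ≤ i ≤ n, if x_i > 0 then y_i = 0. -/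
-- auxiliary lemmas

lemma aux_val1 {n : ℕ} (hn : 2 ≤ n) : ((1 : Fin (n + 1)) : ℕ) = 1 := by
  rw [Fin.val_one']
  exact Nat.mod_eq_of_lt (by omega)

lemma aux_split {n : ℕ} (hn : 2 ≤ n) (f : Fin (n + 1) → ℤ) :
    ∑ i, f i = f 0 + f 1 +
      ∑ i ∈ Finset.univ.filter (fun i : Fin (n + 1) => 2 ≤ (i : ℕ)), f i := by
  have h01 : (0 : Fin (n + 1)) ≠ 1 := by
    intro h
    have := congrArg Fin.val h
    rw [Fin.val_zero, aux_val1 hn] at this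
    omega
  have hset : Finset.univ.filter (fun i : Fin (n + 1) => ¬ 2 ≤ (i : ℕ)) =
      {0, 1} := by
    ext i
    simp only [Finset.mem_filter, Finset.mem_univ, true_and, Finset.mem_insert,
      Finset.mem_singleton, Fin.ext_iff, aux_val1 hn, Fin.val_zero]
    omega
  have := Finset.sum_filter_add_sum_filter_not Finset.univ
    (fun i : Fin (n + 1) => ¬ 2 ≤ (i : ℕ)) f
  rw [hset, Finset.sum_pair h01] at this
  simp only [not_not] at this
  linarith

lemma aux_split1 {n : ℕ} (hn : 2 ≤ n) (f : Fin (n + 1) → ℤ) :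
    ∑ i ∈ Finset.univ.filter (fun i : Fin (n + 1) => 1 ≤ (i : ℕ)), f i =
      f 1 + ∑ i ∈ Finset.univ.filter (fun i : Fin (n + 1) => 2 ≤ (i : ℕ)), f i := by
  have hset : Finset.univ.filter (fun i : Fin (n + 1) => 1 ≤ (i : ℕ)) =
      insert 1 (Finset.univ.filter (fun i : Fin (n + 1) => 2 ≤ (i : ℕ))) := by
    ext i
    simp only [Finset.mem_filter, Finset.mem_univ, true_and, Finset.mem_insert,
      Fin.ext_iff, aux_val1 hn]
    omega
  rw [hset, Finset.sum_insert (by simp only [Finset.mem_filter, Finset.mem_univ, true_and, aux_val1 hn]; omega)]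

lemma aux_symm {n : ℕ} (x y : Fin (n + 1) → ℤ) (h : ∑ i, x i = ∑ i, y i) :
    ∑ i, max (x i - y i) 0 = ∑ i, max (y i - x i) 0 := by
  have key : ∑ i, (max (x i - y i) 0 - max (y i - x i) 0) = ∑ i, (x i - y i) := by
    apply Finset.sum_congr rfl
    intro i _
    omega
  rw [Finset.sum_sub_distrib, Finset.sum_sub_distrib, h, sub_self] at key
  linarith

theorem stmt_17 (n : ℕ) (hn : 2 ≤ n) (e ℓ t : ℤ) (he : 0 ≤ e)
    (x : Fin (n + 1) → ℤ) (hx : x ∈ simplex n ℓ)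
    (hx0 : x 0 = ℓ - t)
    (ht : t = ∑ i ∈ Finset.univ.filter (fun i : Fin (n + 1) => 1 ≤ (i : ℕ)), x i)
    (hte : t ≤ e)
    (v : Fin (n + 1) → ℤ)
    (hv : v = fun i : Fin (n + 1) => if (i : ℕ) = 0 then ℓ - x 1 - e - 1
              else if (i : ℕ) = 1 then x 1 + e + 1 else 0)
    (hv0 : 0 ≤ ℓ - x 1 - e - 1) :
    ∀ y ∈ simplex n ℓ, sdist v y = e → sdist x y = 2 * e + 1 →
      ∃ u : ℤ, 0 ≤ u ∧ u ≤ e ∧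
        y 0 = ℓ - x 1 - 2 * e - 1 ∧ y 1 = x 1 + e + 1 + u ∧
        (∑ i ∈ Finset.univ.filter (fun i : Fin (n + 1) => 2 ≤ (i : ℕ)), y i) = e - u ∧
        (∀ i : Fin (n + 1), 2 ≤ (i : ℕ) → 0 < x i → y i = 0) := by
  intro y hy hvy hxy
  obtain ⟨hxpos, hxsum⟩ := hx
  obtain ⟨hypos, hysum⟩ := hy
  -- values of v
  have hv0' : v 0 = ℓ - x 1 - e - 1 := by rw [hv]; simp
  have hv1 : v 1 = x 1 + e + 1 := by
    rw [hv]
    simp only [aux_val1 hn]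
    norm_num
  have hvi : ∀ i : Fin (n + 1), 2 ≤ (i : ℕ) → v i = 0 := by
    intro i hi
    rw [hv]
    simp only
    rw [if_neg (by omega), if_neg (by omega)]
  -- sum of v
  have hvsum : ∑ i, v i = ℓ := by
    rw [aux_split hn v, hv0', hv1]
    rw [Finset.sum_congr rfl (fun i hi => hvi i (Finset.mem_filter.mp hi).2)]
    simp
  -- t in terms of x
  have htS : t = x 1 + ∑ i ∈ Finset.univ.filter (fun i : Fin (n + 1) => 2 ≤ (i : ℕ)), x i := by
    rw [ht, aux_split1 hn]
  -- sum splits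
  have hxsplit := aux_split hn x
  have hysplit := aux_split hn y
  rw [hxsum] at hxsplit
  rw [hysum] at hysplit
  -- sdist x v = e + 1 (computed in the v - x direction)
  have hSx : ∑ i ∈ Finset.univ.filter (fun i : Fin (n + 1) => 2 ≤ (i : ℕ)),
      max (v i - x i) 0 = 0 := by
    apply Finset.sum_eq_zero
    intro i hi
    have hi2 := (Finset.mem_filter.mp hi).2
    have := hxpos i
    rw [hvi i hi2]
    omega
  have hdxv : ∑ i, max (v i - x i) 0 = e + 1 := by
    rw [aux_split hn, hSx, hv0', hv1, hx0]
    have h1 : x 1 ≥ 0 := hxpos 1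
    omega
  -- sdist v y = e computed in the y - v direction
  have hdyv : ∑ i, max (y i - v i) 0 = e := by
    rw [← hvy]
    exact (aux_symm v y (by rw [hvsum, hysum])).symm
  -- sdist x y = 2e+1 in the y - x direction
  have hdyx : ∑ i, max (y i - x i) 0 = 2 * e + 1 := by
    rw [← hxy]
    exact (aux_symm x y (by rw [hxsum, hysum])).symm
  -- coordinatewise triangle equality
  have hle : ∀ i : Fin (n + 1), max (y i - x i) 0 ≤
      max (v i - x i) 0 + max (y i - v i) 0 := by
    intro i; omega
  have hsumeq : ∑ i, max (y i - x i) 0 =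
      ∑ i, (max (v i - x i) 0 + max (y i - v i) 0) := by
    rw [Finset.sum_add_distrib, hdxv, hdyv, hdyx]
    ring
  have heq := (Finset.sum_eq_sum_iff_of_le (fun i _ => hle i)).mp hsumeq
  -- coordinate 1
  have h1 := heq 1 (Finset.mem_univ 1)
  rw [hv1] at h1
  have hu0 : x 1 + e + 1 ≤ y 1 := by omega
  -- coordinates ≥ 2 with x i > 0
  have hzero : ∀ i : Fin (n + 1), 2 ≤ (i : ℕ) → 0 < x i → y i = 0 := by
    intro i hi hxi
    have h := heq i (Finset.mem_univ i)
    rw [hvi i hi] at h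
    have := hypos i
    omega
  -- the sum S
  set S := ∑ i ∈ Finset.univ.filter (fun i : Fin (n + 1) => 2 ≤ (i : ℕ)), y i with hS
  have hSnn : 0 ≤ S :=
    Finset.sum_nonneg (fun i _ => hypos i)
  -- compute sdist v y = e in the y - v direction, coordinatewise
  have hSy : ∑ i ∈ Finset.univ.filter (fun i : Fin (n + 1) => 2 ≤ (i : ℕ)),
      max (y i - v i) 0 = S := by
    apply Finset.sum_congr rfl
    intro i hi
    have hi2 := (Finset.mem_filter.mp hi).2
    have := hypos i
    rw [hvi i hi2]
    omega
  have hdyv' := hdyv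
  rw [aux_split hn, hSy, hv0', hv1] at hdyv'
  -- y 0 = v 0 - (y1 - v1) - S from the sum condition
  refine ⟨y 1 - x 1 - e - 1, by omega, ?_, ?_, by ring, ?_, hzero⟩ <;> omega
end

section
/- Let n ≥ 2, e ≥ 0, let x = (ℓ − t, x_1, …, x_n) ∈ Δ_ℓ^n with t = x_1 + ⋯ + x_n ≤ e, and let y = (ℓ − x_1 − 2e − 1, x_1 + e + 1 + u, y_2, …, y_n) ∈ Δ_ℓ^n with 0 ≤ u ≤ e, y_2 + ⋯ + y_n = e − u, and such that for each i with 2 ≤ i ≤ n, x_i > 0 implies y_i = 0. Define w = (ℓ − t − e − 1, x_1 + u, max{x_2, y_2} + 1, max{x_3, y_3}, …, max{x_n, y_n}) and assume ℓ − t − e − 1 ≥ 0. Then w ∈ Δ_ℓ^n and d(x, w) = d(y, w) = e + 1. -/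
lemma filter2_eq (m : ℕ) :
    (Finset.univ.filter (fun i : Fin (m+3) => 2 ≤ (i:ℕ)))
      = (Finset.univ.erase 0).erase 1 := by
  ext i
  have h0 : ((0 : Fin (m+3)) : ℕ) = 0 := rfl
  have h1 : ((1 : Fin (m+3)) : ℕ) = 1 := rfl
  simp only [Finset.mem_filter, Finset.mem_univ, true_and, Finset.mem_erase, ne_eq, Fin.ext_iff,
    h0, h1, and_true]
  omega

lemma sum_split3 {m : ℕ} (f : Fin (m+3) → ℤ) :
    ∑ i, f i = f 0 + f 1
      + ∑ i ∈ Finset.univ.filter (fun i : Fin (m+3) => 2 ≤ (i:ℕ)), f i := by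
  rw [filter2_eq,
    ← Finset.add_sum_erase _ f (Finset.mem_univ (0 : Fin (m+3))),
    ← Finset.add_sum_erase _ f
      (show (1:Fin (m+3)) ∈ Finset.univ.erase 0 by simp)]
  ring

lemma sum_split2 {m : ℕ} (f : Fin (m+3) → ℤ) :
    ∑ i ∈ Finset.univ.filter (fun i : Fin (m+3) => 1 ≤ (i:ℕ)), f i
      = f 1 + ∑ i ∈ Finset.univ.filter (fun i : Fin (m+3) => 2 ≤ (i:ℕ)), f i := by
  have h1 : (Finset.univ.filter (fun i : Fin (m+3) => 1 ≤ (i:ℕ)))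
      = Finset.univ.erase 0 := by
    ext i; have h0 : ((0 : Fin (m+3)) : ℕ) = 0 := rfl
    simp only [Finset.mem_filter, Finset.mem_univ, true_and, Finset.mem_erase, ne_eq,
      Fin.ext_iff, h0, and_true]; omega
  rw [h1, filter2_eq,
    ← Finset.add_sum_erase _ f (show (1:Fin (m+3)) ∈ Finset.univ.erase 0 by simp)]

lemma sum_ind (m : ℕ) :
    ∑ i ∈ Finset.univ.filter (fun i : Fin (m+3) => 2 ≤ (i:ℕ)),
      (if (i:ℕ) = 2 then (1:ℤ) else 0) = 1 := by
  have h : ∀ i : Fin (m+3), ((i:ℕ) = 2) = (i = 2) := by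
    intro i; simp [Fin.ext_iff, Nat.mod_eq_of_lt (show 2 < m + 3 by omega)]
  simp only [h]
  rw [Finset.sum_ite_eq' _ (2 : Fin (m+3)) (fun _ => (1:ℤ))]
  simp [Nat.mod_eq_of_lt (show 2 < m + 3 by omega)]

theorem stmt_18 (n : ℕ) (hn : 2 ≤ n) (e ℓ t u : ℤ) (he : 0 ≤ e)
    (x y : Fin (n + 1) → ℤ) (hx : x ∈ simplex n ℓ) (hy : y ∈ simplex n ℓ)
    (hx0 : x 0 = ℓ - t)
    (ht : t = ∑ i ∈ Finset.univ.filter (fun i : Fin (n + 1) => 1 ≤ (i : ℕ)), x i)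
    (hte : t ≤ e)
    (hy0 : y 0 = ℓ - x 1 - 2 * e - 1) (hy1 : y 1 = x 1 + e + 1 + u)
    (hu0 : 0 ≤ u) (hue : u ≤ e)
    (hys : (∑ i ∈ Finset.univ.filter (fun i : Fin (n + 1) => 2 ≤ (i : ℕ)), y i) = e - u)
    (hxy : ∀ i : Fin (n + 1), 2 ≤ (i : ℕ) → 0 < x i → y i = 0)
    (w : Fin (n + 1) → ℤ)
    (hw : w = fun i : Fin (n + 1) => if (i : ℕ) = 0 then ℓ - t - e - 1
              else if (i : ℕ) = 1 then x 1 + u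
              else if (i : ℕ) = 2 then max (x i) (y i) + 1
              else max (x i) (y i))
    (hw0 : 0 ≤ ℓ - t - e - 1) :
    w ∈ simplex n ℓ ∧ sdist x w = e + 1 ∧ sdist y w = e + 1 := by
  obtain ⟨m, rfl⟩ : ∃ m, n = m + 2 := ⟨n - 2, by omega⟩
  obtain ⟨hxnn, hxsum⟩ := hx
  obtain ⟨hynn, hysum⟩ := hy
  subst hw
  set w : Fin (m + 2 + 1) → ℤ := fun i : Fin (m + 2 + 1) =>
      if (i : ℕ) = 0 then ℓ - t - e - 1
      else if (i : ℕ) = 1 then x 1 + u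
      else if (i : ℕ) = 2 then max (x i) (y i) + 1
      else max (x i) (y i) with hwdef
  have hmax : ∀ i : Fin (m+3), 2 ≤ (i:ℕ) → max (x i) (y i) = x i + y i := by
    intro i hi
    rcases lt_or_ge 0 (x i) with h|h
    · rw [hxy i hi h]
      simp [le_of_lt h]
    · have hx0' : x i = 0 := le_antisymm h (hxnn i)
      rw [hx0']
      simp [hynn i]
  have hwS2 : ∀ i : Fin (m+3), 2 ≤ (i:ℕ) →
      w i = x i + y i + (if (i:ℕ) = 2 then 1 else 0) := by
    intro i hi
    rw [hwdef]
    simp only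
    rw [if_neg (by omega), if_neg (by omega), hmax i hi]
    split <;> ring
  have hv0 : ((0 : Fin (m+3)) : ℕ) = 0 := rfl
  have hv1 : ((1 : Fin (m+3)) : ℕ) = 1 := rfl
  have hw0' : w 0 = ℓ - t - e - 1 := by rw [hwdef]; simp
  have hw1' : w 1 = x 1 + u := by rw [hwdef]; simp
  have hS2x : ∑ i ∈ Finset.univ.filter (fun i : Fin (m+3) => 2 ≤ (i:ℕ)), x i
      = t - x 1 := by
    have := sum_split2 x
    rw [ht]
    linarith [this]
  have hS2xnn : 0 ≤ ∑ i ∈ Finset.univ.filter (fun i : Fin (m+3) => 2 ≤ (i:ℕ)), x i :=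
    Finset.sum_nonneg fun i _ => hxnn i
  have hwsumS2 : ∑ i ∈ Finset.univ.filter (fun i : Fin (m+3) => 2 ≤ (i:ℕ)), w i
      = (t - x 1) + (e - u) + 1 := by
    rw [Finset.sum_congr rfl (fun i hi => hwS2 i (Finset.mem_filter.mp hi).2)]
    rw [Finset.sum_add_distrib, Finset.sum_add_distrib, hS2x, hys, sum_ind]
  refine ⟨⟨?_, ?_⟩, ?_, ?_⟩
  · intro i
    rw [hwdef]
    simp only
    rcases Nat.lt_or_ge (i : ℕ) 2 with h2 | h2
    · interval_cases h : (i : ℕ)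
      · simp [h]; omega
      · simp [h]; linarith [hxnn 1]
    · rw [if_neg (by omega), if_neg (by omega)]
      have := hxnn i
      have := hynn i
      split <;> [skip; skip] <;> simp [le_max_iff] <;> omega
  · rw [sum_split3 w, hw0', hw1', hwsumS2]
    linarith
  · show ∑ i, max (x i - w i) 0 = e + 1
    rw [sum_split3 (fun i => max (x i - w i) 0)]
    beta_reduce
    have h0 : max (x 0 - w 0) 0 = e + 1 := by
      rw [hw0', hx0]; rw [max_eq_left (by linarith)]; ring
    have h1 : max (x 1 - w 1) 0 = 0 := by
      rw [hw1']; rw [max_eq_right (by linarith)]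
    have hS : ∑ i ∈ Finset.univ.filter (fun i : Fin (m+3) => 2 ≤ (i:ℕ)),
        max (x i - w i) 0 = 0 := by
      apply Finset.sum_eq_zero
      intro i hi
      have hi2 := (Finset.mem_filter.mp hi).2
      rw [hwS2 i hi2, max_eq_right]
      have := hynn i
      split <;> linarith
    rw [h0, h1, hS]; ring
  · show ∑ i, max (y i - w i) 0 = e + 1
    rw [sum_split3 (fun i => max (y i - w i) 0)]
    beta_reduce
    have hS2x' : 0 ≤ t - x 1 := hS2x ▸ hS2xnn
    have h0 : max (y 0 - w 0) 0 = 0 := by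
      rw [hw0', hy0, max_eq_right (by linarith [hxnn 1])]
    have h1 : max (y 1 - w 1) 0 = e + 1 := by
      rw [hw1', hy1, max_eq_left (by linarith)]; ring
    have hS : ∑ i ∈ Finset.univ.filter (fun i : Fin (m+3) => 2 ≤ (i:ℕ)),
        max (y i - w i) 0 = 0 := by
      apply Finset.sum_eq_zero
      intro i hi
      have hi2 := (Finset.mem_filter.mp hi).2
      rw [hwS2 i hi2, max_eq_right]
      have := hxnn i
      split <;> linarith
    rw [h0, h1, hS]; ring
end
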